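/- arXiv:2508.20940 — 5 statements merged into one kernel-verified Lean document; each statement's English description precedes it below -/
import Mathlib

section
/- Let q = 3, let n ≥ 3 be an integer, and let M = 𝔽_3^{n×n} ⊕ 𝔽_3^{n×n} (the case t = 2). Then there exists no perfect linear sum-rank code C in M whose minimum distance d satisfies ⌊(d−1)/2⌋ ≥ 1 (equivalently, d ≥ 3). -/
open Matrix

/-- The sum-rank weight of a tuple of matrices. -/
noncomputable def sumRankW {F : Type} [Field F] {t n m : ℕ}
    (X : Fin t → Matrix (Fin n) (Fin m) F) : ℕ :=
  ∑ i, (X i).rank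

/-- The number of tuples of matrices of sum-rank weight at most `r`
(the volume of a sum-rank ball of radius `r`). -/
noncomputable def ballVol (F : Type) [Field F] [Fintype F] (t n m r : ℕ) : ℕ :=
  Nat.card {X : Fin t → Matrix (Fin n) (Fin m) F // sumRankW X ≤ r}

/-- `d` is the minimum sum-rank distance of the linear code `C`:
`d` is the least sum-rank weight of a nonzero codeword of `C`
(in particular `C` contains a nonzero element). -/
def IsMinDist {F : Type} [Field F] {t n : ℕ}
    (C : Submodule F (Fin t → Matrix (Fin n) (Fin n) F)) (d : ℕ) : Prop :=
  IsLeast {w | ∃ x ∈ C, x ≠ 0 ∧ sumRankW x = w} d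

/-- The linear code `C` with minimum distance `d` is perfect:
`|C| · V_{⌊(d-1)/2⌋} = |M|`. -/
def IsPerfect (F : Type) [Field F] [Fintype F] {t n : ℕ}
    (C : Submodule F (Fin t → Matrix (Fin n) (Fin n) F)) (d : ℕ) : Prop :=
  Nat.card C * ballVol F t n n ((d - 1) / 2) =
    Nat.card (Fin t → Matrix (Fin n) (Fin n) F)

/-!
If `C` is perfect with packing radius `k = ⌊(d-1)/2⌋`, then `|C| · V_k = q^{2n²}`. Deleting `k`
columns from each of the two blocks is injective on `C`, because a difference of codewords supported
on those columns has sum-rank weight at most `2k < d`; so `|C| ≤ q^{2n(n-k)}` and `V_k ≥ q^{2nk}`.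

On the other hand, let `R_a` be the number of `n × n` matrices of rank at most `a`. Every such
matrix factors as `B * C` with `C` an `a × n` matrix of full rank, and `GL_a` acts freely on these
factorizations, so `R_a · |GL_a| < q^{2na}`. For `q ≥ 3` we have `|GL_a| ≥ q^{a²}/2`, and summing
`V_k ≤ ∑_a R_a R_{k-a}` gives `V_k < q^{2nk}`.
-/

open Finset Module

theorem prod_range_succ_pow_sub_pow (q a : ℕ) :
    ∏ i ∈ range (a + 1), (q ^ (a + 1) - q ^ i) =
      (q ^ (a + 1) - 1) * q ^ a * ∏ i ∈ range a, (q ^ a - q ^ i) := by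
  rw [prod_range_succ', pow_zero, mul_comm, mul_assoc]
  congr 1
  calc ∏ i ∈ range a, (q ^ (a + 1) - q ^ (i + 1)) = ∏ i ∈ range a, q * (q ^ a - q ^ i) := by
        simp only [Nat.mul_sub, ← pow_succ']
    _ = q ^ a * ∏ i ∈ range a, (q ^ a - q ^ i) := by rw [prod_mul_distrib, prod_const, card_range]

theorem pow_mul_self_le_two_mul_prod {q : ℕ} (hq : 3 ≤ q) (a : ℕ) :
    q ^ (a * a) ≤ 2 * ∏ i ∈ range a, (q ^ a - q ^ i) := by
  -- the invariant is `∏_{j ≤ a} (1 - q⁻ʲ) ≥ (1 + q⁻ᵃ) / 2`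
  suffices h : ∀ a, q ^ (a * a) * (q ^ a + 1) ≤ 2 * q ^ a * ∏ i ∈ range a, (q ^ a - q ^ i) by
    refine Nat.le_of_mul_le_mul_right ?_ (pow_pos (by omega : 0 < q) a)
    calc q ^ (a * a) * q ^ a ≤ q ^ (a * a) * (q ^ a + 1) := by gcongr; omega
      _ ≤ _ := h a
      _ = _ := by ring
  intro a
  induction a with
  | zero => simp
  | succ a ih =>
    rw [prod_range_succ_pow_sub_pow]
    set P := ∏ i ∈ range a, (q ^ a - q ^ i)
    have hx : 1 ≤ q ^ a := Nat.one_le_pow _ _ (by omega)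
    have key : q ^ a * (q ^ (a + 1) + 1) ≤ (q ^ (a + 1) - 1) * (q ^ a + 1) := by
      have : 2 * q ^ a + 1 ≤ q ^ (a + 1) := by rw [pow_succ]; nlinarith
      zify [(by omega : 1 ≤ q ^ (a + 1))] at this ⊢; nlinarith
    calc q ^ ((a + 1) * (a + 1)) * (q ^ (a + 1) + 1)
        = q ^ (a + 1) * (q ^ (a * a) * (q ^ a * (q ^ (a + 1) + 1))) := by ring
      _ ≤ q ^ (a + 1) * (q ^ (a * a) * ((q ^ (a + 1) - 1) * (q ^ a + 1))) := by gcongr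
      _ = q ^ (a + 1) * (q ^ (a + 1) - 1) * (q ^ (a * a) * (q ^ a + 1)) := by ring
      _ ≤ q ^ (a + 1) * (q ^ (a + 1) - 1) * (2 * q ^ a * P) := by gcongr
      _ = 2 * q ^ (a + 1) * ((q ^ (a + 1) - 1) * q ^ a * P) := by ring

theorem four_add_four_mul_sq_mul_lt {q : ℕ} (hq : 3 ≤ q) (j : ℕ) :
    4 + 4 * q ^ 2 * (j + 1) < q ^ (2 * (j + 2)) := by
  have hq2 : 9 ≤ q ^ 2 := by nlinarith
  induction j with
  | zero => rw [show q ^ (2 * (0 + 2)) = q ^ 2 * q ^ 2 by ring]; nlinarith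
  | succ j ih =>
    rw [show q ^ (2 * (j + 1 + 2)) = q ^ 2 * q ^ (2 * (j + 2)) by ring]
    generalize q ^ 2 = y at *
    generalize q ^ (2 * (j + 2)) = z at *
    have hyz : y * (5 + 4 * y * (j + 1)) ≤ y * z := Nat.mul_le_mul_left y (by omega)
    nlinarith

theorem Nat.card_matrix (F α β : Type*) [Finite α] [Finite β] :
    Nat.card (Matrix α β F) = Nat.card F ^ (Nat.card α * Nat.card β) := by
  rw [show Nat.card (Matrix α β F) = Nat.card (α → β → F) from rfl, Nat.card_fun, Nat.card_fun,
    ← pow_mul, mul_comm]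

namespace Matrix

variable {F : Type*} [Field F]

theorem eq_zero_of_rank_eq_zero {m n : Type*} [Fintype n] [DecidableEq n] {X : Matrix m n F}
    (h : X.rank = 0) : X = 0 := by
  have : X.mulVecLin = 0 := LinearMap.range_eq_bot.mp (Submodule.finrank_eq_zero.mp h)
  rw [← toLin'_apply'] at this
  exact toLin'.map_eq_zero_iff.mp this

theorem rank_le_card_of_forall_notMem_eq_zero {m n : Type*} [Fintype m] [Fintype n]
    [DecidableEq n] (X : Matrix m n F) (s : Finset n) (h : ∀ i, ∀ j ∉ s, X i j = 0) :
    X.rank ≤ #s := by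
  classical
  set D : Matrix n n F := diagonal fun j => if j ∈ s then 1 else 0
  have hX : X * D = X := by
    ext i j
    by_cases hj : j ∈ s <;> simp [D, hj, h i j]
  calc X.rank = (X * D).rank := by rw [hX]
    _ ≤ D.rank := rank_mul_le_right _ _
    _ = #s := by simp [D, rank_diagonal, Fintype.card_subtype]

theorem exists_mul_eq_of_rank_le {m n : Type*} [Fintype m] [Fintype n] [DecidableEq n] {a : ℕ}
    (X : Matrix m n F) (hXa : X.rank ≤ a) (han : a ≤ Fintype.card n) :
    ∃ (B : Matrix m (Fin a) F) (C : Matrix (Fin a) n F) (D : Matrix n (Fin a) F),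
      X = B * C ∧ C * D = 1 := by
  set f := toLin' X
  -- `C` is the quotient map by a subspace `K ≤ ker f` of codimension `a`
  have hker : Fintype.card n - a ≤ finrank F (LinearMap.ker f) := by
    have := f.finrank_range_add_finrank_ker
    rw [finrank_fintype_fun_eq_card] at this
    have : finrank F (LinearMap.range f) ≤ a := hXa
    omega
  obtain ⟨v, hv⟩ := exists_linearIndependent_of_le_finrank hker
  set K := Submodule.span F (Set.range ((LinearMap.ker f).subtype ∘ v))
  have hKf : K ≤ LinearMap.ker f := by
    rw [Submodule.span_le]
    rintro _ ⟨i, rfl⟩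
    exact (v i).2
  have hK : finrank F ((n → F) ⧸ K) = finrank F (Fin a → F) := by
    have := K.finrank_quotient_add_finrank
    rw [finrank_span_eq_card (hv.map' _ (LinearMap.ker f).ker_subtype)] at this
    simp only [finrank_fintype_fun_eq_card, Fintype.card_fin] at this ⊢
    omega
  let e := LinearEquiv.ofFinrankEq _ _ hK
  let C := e.toLinearMap ∘ₗ K.mkQ
  have hC : Function.Surjective C := e.surjective.comp K.mkQ_surjective
  obtain ⟨D, hD⟩ := C.exists_rightInverse_of_surjective (LinearMap.range_eq_top.mpr hC)
  refine ⟨LinearMap.toMatrix' (K.liftQ f hKf ∘ₗ e.symm.toLinearMap), LinearMap.toMatrix' C,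
    LinearMap.toMatrix' D, ?_, ?_⟩
  · have : K.liftQ f hKf ∘ₗ e.symm.toLinearMap ∘ₗ C = f := by
      ext v; simp [C]
    rw [← LinearMap.toMatrix'_comp, LinearMap.comp_assoc, this, LinearMap.toMatrix'_toLin']
  · rw [← LinearMap.toMatrix'_comp, hD, LinearMap.toMatrix'_id]

end Matrix

noncomputable def rankBallVol (F : Type*) [Field F] (m n a : ℕ) : ℕ :=
  Nat.card {X : Matrix (Fin m) (Fin n) F // X.rank ≤ a}

theorem rankBallVol_zero (F : Type*) [Field F] (m n : ℕ) : rankBallVol F m n 0 = 1 :=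
  Nat.card_eq_one_iff_unique.mpr
    ⟨⟨fun X Y => Subtype.ext <| by
      rw [eq_zero_of_rank_eq_zero (Nat.le_zero.mp X.2),
        eq_zero_of_rank_eq_zero (Nat.le_zero.mp Y.2)]⟩,
    ⟨⟨0, by simp⟩⟩⟩

section RankBall

variable {F : Type*} [Field F] [Fintype F]

theorem rankBallVol_mul_card_GL_lt {m n a : ℕ} (ha : 0 < a) (han : a ≤ n) :
    rankBallVol F m n a * Nat.card (GL (Fin a) F) < Fintype.card F ^ ((m + n) * a) := by
  classical
  choose B C D hBC hCD using fun X : {X : Matrix (Fin m) (Fin n) F // X.rank ≤ a} =>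
    X.1.exists_mul_eq_of_rank_le X.2 (by simpa using han)
  have cancel : ∀ X (G H : Matrix (Fin a) (Fin a) F), G * C X = H * C X → G = H := by
    intro X G H h
    simpa [Matrix.mul_assoc, hCD] using congrArg (· * D X) h
  have regroup : ∀ X (G : GL (Fin a) F), X.1 = (B X * (G⁻¹).val) * (G.val * C X) := by
    intro X G
    rw [hBC X, Matrix.mul_assoc, ← Matrix.mul_assoc (G⁻¹).val, Units.inv_mul, Matrix.one_mul]
  let Φ (p : {X : Matrix (Fin m) (Fin n) F // X.rank ≤ a} × GL (Fin a) F) :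
      Matrix (Fin m) (Fin a) F × Matrix (Fin a) (Fin n) F :=
    (B p.1 * (p.2⁻¹).val, p.2.val * C p.1)
  have hΦ : Function.Injective Φ := by
    rintro ⟨X, G⟩ ⟨Y, H⟩ h
    simp only [Φ, Prod.mk.injEq] at h
    obtain rfl : X = Y := Subtype.ext <| by rw [regroup X G, regroup Y H, h.1, h.2]
    exact Prod.ext rfl (Units.ext (cancel X _ _ h.2))
  have hzero : (0, 0) ∉ Set.range Φ := by
    rintro ⟨⟨X, G⟩, h⟩
    have : Nonempty (Fin a) := ⟨⟨0, ha⟩⟩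
    refine G.ne_zero (cancel X _ _ ?_)
    simpa [Φ] using congrArg Prod.snd h
  calc rankBallVol F m n a * Nat.card (GL (Fin a) F)
      = Fintype.card ({X : Matrix (Fin m) (Fin n) F // X.rank ≤ a} × GL (Fin a) F) := by
        rw [rankBallVol, ← Nat.card_prod, Nat.card_eq_fintype_card]
    _ < Fintype.card (Matrix (Fin m) (Fin a) F × Matrix (Fin a) (Fin n) F) :=
        Fintype.card_lt_of_injective_of_notMem Φ hΦ hzero
    _ = Fintype.card F ^ ((m + n) * a) := by
        rw [← Nat.card_eq_fintype_card, Nat.card_prod, Nat.card_matrix, Nat.card_matrix, ← pow_add]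
        simp only [Nat.card_eq_fintype_card, Fintype.card_fin]
        ring_nf

theorem pow_mul_self_le_two_mul_card_GL (hq : 3 ≤ Fintype.card F) (a : ℕ) :
    Fintype.card F ^ (a * a) ≤ 2 * Nat.card (GL (Fin a) F) := by
  rw [card_GL_field, Fin.prod_univ_eq_prod_range (fun i => Fintype.card F ^ a - Fintype.card F ^ i)]
  exact pow_mul_self_le_two_mul_prod hq a

theorem rankBallVol_mul_pow_le (hq : 3 ≤ Fintype.card F) {n a : ℕ} (ha : 0 < a) (han : a ≤ n) :
    rankBallVol F n n a * Fintype.card F ^ (a * a) ≤ 2 * Fintype.card F ^ (2 * (n * a)) := by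
  calc rankBallVol F n n a * Fintype.card F ^ (a * a)
      ≤ rankBallVol F n n a * (2 * Nat.card (GL (Fin a) F)) :=
        Nat.mul_le_mul_left _ (pow_mul_self_le_two_mul_card_GL hq a)
    _ = 2 * (rankBallVol F n n a * Nat.card (GL (Fin a) F)) := by ring
    _ ≤ 2 * Fintype.card F ^ (2 * (n * a)) := by
        have := (rankBallVol_mul_card_GL_lt (F := F) (m := n) ha han).le
        rw [show (n + n) * a = 2 * (n * a) by ring] at this
        omega

end RankBall

theorem sumRankW_two {F : Type} [Field F] {n m : ℕ} (X : Fin 2 → Matrix (Fin n) (Fin m) F) :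
    sumRankW X = (X 0).rank + (X 1).rank := by
  simp [sumRankW, Fin.sum_univ_two]

theorem ballVol_two_le_sum (F : Type) [Field F] [Fintype F] (m n k : ℕ) :
    ballVol F 2 m n k ≤ ∑ a ∈ range (k + 1), rankBallVol F m n a * rankBallVol F m n (k - a) := by
  classical
  let S (a : ℕ) : Finset (Matrix (Fin m) (Fin n) F) := {X | X.rank ≤ a}
  have hS (a : ℕ) : rankBallVol F m n a = #(S a) := by
    rw [rankBallVol, Nat.card_eq_fintype_card, Fintype.card_subtype]
  calc ballVol F 2 m n k
      = #{p : Matrix (Fin m) (Fin n) F × Matrix (Fin m) (Fin n) F | p.1.rank + p.2.rank ≤ k} := by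
        rw [ballVol, ← Fintype.card_subtype, ← Nat.card_eq_fintype_card]
        exact Nat.card_congr ((piFinTwoEquiv _).subtypeEquiv fun X => by rw [sumRankW_two]; rfl)
    _ ≤ #((range (k + 1)).biUnion fun a => S a ×ˢ S (k - a)) := by
        refine card_le_card fun p hp => ?_
        simp only [mem_filter, mem_univ, true_and] at hp
        simp only [S, mem_biUnion, mem_range, mem_product, mem_filter, mem_univ, true_and]
        exact ⟨p.1.rank, by omega, le_rfl, by omega⟩
    _ ≤ ∑ a ∈ range (k + 1), rankBallVol F m n a * rankBallVol F m n (k - a) := by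
        simp only [hS, ← card_product]
        exact card_biUnion_le

section TwoBlocks

variable {F : Type} [Field F] [Fintype F]

theorem rankBallVol_mul_rankBallVol_mul_pow_le (hq : 3 ≤ Fintype.card F) {n a b : ℕ}
    (ha : 0 < a) (hb : 0 < b) (habn : a + b ≤ n) :
    rankBallVol F n n a * rankBallVol F n n b * Fintype.card F ^ (2 * (a + b)) ≤
      4 * Fintype.card F ^ 2 * Fintype.card F ^ (2 * (n * (a + b))) := by
  set q := Fintype.card F
  have hexp : 2 * (a + b) ≤ a * a + b * b + 2 := by nlinarith
  calc rankBallVol F n n a * rankBallVol F n n b * q ^ (2 * (a + b))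
      ≤ rankBallVol F n n a * rankBallVol F n n b * q ^ (a * a + b * b + 2) :=
        Nat.mul_le_mul_left _ (Nat.pow_le_pow_right (by omega) hexp)
    _ = (rankBallVol F n n a * q ^ (a * a)) * (rankBallVol F n n b * q ^ (b * b)) * q ^ 2 := by
        ring
    _ ≤ (2 * q ^ (2 * (n * a))) * (2 * q ^ (2 * (n * b))) * q ^ 2 :=
        Nat.mul_le_mul_right _ (Nat.mul_le_mul (rankBallVol_mul_pow_le hq ha (by omega))
          (rankBallVol_mul_pow_le hq hb (by omega)))
    _ = 4 * q ^ 2 * q ^ (2 * (n * (a + b))) := by ring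

theorem ballVol_two_one_lt (hq : 3 ≤ Fintype.card F) {n : ℕ} (hn : 1 ≤ n) :
    ballVol F 2 n n 1 < Fintype.card F ^ (2 * (n * 1)) := by
  have hsum := ballVol_two_le_sum F n n 1
  rw [sum_range_succ, sum_range_one, Nat.sub_zero, Nat.sub_self, rankBallVol_zero] at hsum
  -- the estimate of `rankBallVol_mul_pow_le` is too weak here; use `|GL 1| = q - 1 ≥ 2` instead
  have hGL : 2 ≤ Nat.card (GL (Fin 1) F) := by
    rw [card_GL_field, Fin.prod_univ_one, Fin.val_zero, pow_one, pow_zero]; omega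
  calc ballVol F 2 n n 1 ≤ rankBallVol F n n 1 * 2 := by omega
    _ ≤ rankBallVol F n n 1 * Nat.card (GL (Fin 1) F) := Nat.mul_le_mul_left _ hGL
    _ < Fintype.card F ^ ((n + n) * 1) := rankBallVol_mul_card_GL_lt one_pos hn
    _ = Fintype.card F ^ (2 * (n * 1)) := by ring_nf

theorem ballVol_two_add_two_lt (hq : 3 ≤ Fintype.card F) {n j : ℕ} (hjn : j + 2 ≤ n) :
    ballVol F 2 n n (j + 2) < Fintype.card F ^ (2 * (n * (j + 2))) := by
  have hsum := ballVol_two_le_sum F n n (j + 2)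
  rw [sum_range_succ, sum_range_succ', Nat.sub_self, Nat.sub_zero, rankBallVol_zero] at hsum
  set q := Fintype.card F
  set R := rankBallVol F n n
  set V := q ^ (2 * (n * (j + 2)))
  have hend : R (j + 2) * q ^ (2 * (j + 2)) ≤ 2 * V :=
    (Nat.mul_le_mul_left _ (Nat.pow_le_pow_right (by omega) (by nlinarith))).trans
      (rankBallVol_mul_pow_le hq (by omega) hjn)
  have hmid (i : ℕ) (hi : i ∈ range (j + 1)) :
      R (i + 1) * R (j + 2 - (i + 1)) * q ^ (2 * (j + 2)) ≤ 4 * q ^ 2 * V := by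
    rw [mem_range] at hi
    have := rankBallVol_mul_rankBallVol_mul_pow_le hq (n := n) (a := i + 1) (b := j + 2 - (i + 1))
      (by omega) (by omega) (by omega)
    rwa [Nat.add_sub_cancel' (by omega)] at this
  refine Nat.lt_of_mul_lt_mul_right (a := q ^ (2 * (j + 2))) ?_
  calc ballVol F 2 n n (j + 2) * q ^ (2 * (j + 2))
      ≤ (∑ i ∈ range (j + 1), R (i + 1) * R (j + 2 - (i + 1)) + 1 * R (j + 2) + R (j + 2) * 1)
          * q ^ (2 * (j + 2)) := Nat.mul_le_mul_right _ hsum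
    _ = ∑ i ∈ range (j + 1), R (i + 1) * R (j + 2 - (i + 1)) * q ^ (2 * (j + 2))
          + 2 * (R (j + 2) * q ^ (2 * (j + 2))) := by rw [add_mul, add_mul, sum_mul]; ring
    _ ≤ ∑ i ∈ range (j + 1), 4 * q ^ 2 * V + 2 * (2 * V) :=
        Nat.add_le_add (sum_le_sum hmid) (Nat.mul_le_mul_left 2 hend)
    _ = (4 + 4 * q ^ 2 * (j + 1)) * V := by rw [sum_const, card_range, smul_eq_mul]; ring
    _ < q ^ (2 * (j + 2)) * V := by gcongr; exact four_add_four_mul_sq_mul_lt hq j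
    _ = V * q ^ (2 * (j + 2)) := mul_comm _ _

theorem ballVol_two_lt (hq : 3 ≤ Fintype.card F) {n k : ℕ} (hk : 0 < k) (hkn : k ≤ n) :
    ballVol F 2 n n k < Fintype.card F ^ (2 * (n * k)) := by
  obtain rfl | ⟨j, rfl⟩ : k = 1 ∨ ∃ j, k = j + 2 := by
    rcases k with _ | _ | j
    exacts [absurd hk (lt_irrefl 0), .inl rfl, .inr ⟨j, rfl⟩]
  exacts [ballVol_two_one_lt hq hkn, ballVol_two_add_two_lt hq hkn]

end TwoBlocks

section Code

variable {F : Type} [Field F]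

theorem sumRankW_le_mul {t n m : ℕ} (X : Fin t → Matrix (Fin n) (Fin m) F) :
    sumRankW X ≤ t * m :=
  (sum_le_sum fun i _ => (X i).rank_le_width).trans_eq (by simp)

theorem IsMinDist.le_mul {t n d : ℕ} {C : Submodule F (Fin t → Matrix (Fin n) (Fin n) F)}
    (hC : IsMinDist C d) : d ≤ t * n := by
  obtain ⟨x, -, -, rfl⟩ := hC.1
  exact sumRankW_le_mul x

theorem card_le_of_forall_card_mul_lt_sumRankW [Fintype F] {t m n : ℕ}
    (C : Submodule F (Fin t → Matrix (Fin m) (Fin n) F)) (s : Finset (Fin n))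
    (hC : ∀ x ∈ C, x ≠ 0 → t * #s < sumRankW x) :
    Nat.card C ≤ Fintype.card F ^ (t * (m * (n - #s))) := by
  let π (x : C) : Fin t → Matrix (Fin m) {j // j ∉ s} F := fun i => (x.1 i).submatrix id (↑)
  have hπ : Function.Injective π := by
    intro x y hxy
    by_contra hne
    refine (hC _ (sub_mem x.2 y.2) (sub_ne_zero.mpr (Subtype.coe_injective.ne hne))).not_ge ?_
    calc sumRankW (x.1 - y.1) ≤ ∑ _i : Fin t, #s :=
          sum_le_sum fun i _ => rank_le_card_of_forall_notMem_eq_zero _ s fun r j hj =>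
            sub_eq_zero.mpr (congrFun (congrFun (congrFun hxy i) r) ⟨j, hj⟩)
      _ = t * #s := by simp
  calc Nat.card C ≤ Nat.card (Fin t → Matrix (Fin m) {j // j ∉ s} F) :=
        Nat.card_le_card_of_injective π hπ
    _ = Fintype.card F ^ (t * (m * (n - #s))) := by
        rw [Nat.card_fun, Nat.card_matrix, ← pow_mul]
        simp [Nat.card_eq_fintype_card, Fintype.card_subtype_compl, mul_comm]

theorem pow_le_ballVol_of_isPerfect [Fintype F] {t n d : ℕ}
    {C : Submodule F (Fin t → Matrix (Fin n) (Fin n) F)} (hmin : IsMinDist C d)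
    (hperf : IsPerfect F C d) (htd : t * ((d - 1) / 2) < d) :
    Fintype.card F ^ (t * (n * ((d - 1) / 2))) ≤ ballVol F t n n ((d - 1) / 2) := by
  set k := (d - 1) / 2
  have hkn : k ≤ n := (Nat.lt_of_mul_lt_mul_left (htd.trans_le hmin.le_mul)).le
  obtain ⟨s, -, hs⟩ := exists_subset_card_eq (s := (univ : Finset (Fin n))) (by simpa using hkn)
  have hC := card_le_of_forall_card_mul_lt_sumRankW C s fun x hx hx0 =>
    hs ▸ htd.trans_le (hmin.2 ⟨x, hx, hx0, rfl⟩)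
  rw [hs] at hC
  have hM : Nat.card (Fin t → Matrix (Fin n) (Fin n) F)
      = Fintype.card F ^ (t * (n * k)) * Fintype.card F ^ (t * (n * (n - k))) := by
    rw [Nat.card_fun, Nat.card_matrix, ← pow_mul, ← pow_add, Nat.card_eq_fintype_card]
    congr 1
    simp only [Nat.card_fin]
    rw [← mul_add, ← mul_add, Nat.add_sub_cancel' hkn, mul_comm]
  refine Nat.le_of_mul_le_mul_right ?_ (pow_pos (Fintype.card_pos (α := F)) (t * (n * (n - k))))
  calc Fintype.card F ^ (t * (n * k)) * Fintype.card F ^ (t * (n * (n - k)))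
      = Nat.card C * ballVol F t n n k := by rw [← hM]; exact hperf.symm
    _ ≤ Fintype.card F ^ (t * (n * (n - k))) * ballVol F t n n k := Nat.mul_le_mul_right _ hC
    _ = ballVol F t n n k * Fintype.card F ^ (t * (n * (n - k))) := mul_comm _ _

end Code

theorem stmt_7_general (n : ℕ) :
    ¬ ∃ (C : Submodule (ZMod 3) (Fin 2 → Matrix (Fin n) (Fin n) (ZMod 3))) (d : ℕ),
        IsMinDist C d ∧ IsPerfect (ZMod 3) C d ∧ 1 ≤ (d - 1) / 2 := by
  rintro ⟨C, d, hmin, hperf, hk⟩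
  have hd : d ≤ 2 * n := hmin.le_mul
  have hlower := pow_le_ballVol_of_isPerfect hmin hperf (by omega)
  have hupper := ballVol_two_lt (F := ZMod 3) (n := n) (by simp) hk (by omega)
  exact hupper.not_ge hlower

theorem stmt_7 (n : ℕ) (hn : 3 ≤ n) :
    ¬ ∃ (C : Submodule (ZMod 3) (Fin 2 → Matrix (Fin n) (Fin n) (ZMod 3))) (d : ℕ),
        IsMinDist C d ∧ IsPerfect (ZMod 3) C d ∧ 1 ≤ (d - 1) / 2 :=
  stmt_7_general n
end

section
/- Let q be a prime power, t ≥ 1 and n ≥ 2 integers, and M = (𝔽_q^{n×n})^t. If q > t + 1, then there exists no perfect linear sum-rank code C in M whose minimum distance d satisfies ⌊(d−1)/2⌋ = 1 (i.e., d ∈ {3, 4}). -/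
open Matrix

/-!
A perfect code with `⌊(d - 1)/2⌋ = 1` makes the volume `V = 1 + t R` of a ball of radius one
divide `|M| = q ^ N`, where `R = (q ^ n - 1)² / (q - 1)` counts the rank-one matrices: such a
matrix is `vecMulVec v w` with `(v, w)` unique up to `(c • v, c⁻¹ • w)`. As `q` is a prime
power and `V > q²`, this forces `q² ∣ V`. But `V (q - 1) = q - 1 + t (q ^ n - 1)²` is
`q - 1 + t` modulo `q²` because `n ≥ 2`, and `0 < q - 1 + t < q²` when `t + 1 < q`.
-/

theorem Nat.card_fun_ne_zero {α m : Type*} [Zero α] [Fintype α] [Fintype m] :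
    Nat.card {v : m → α // v ≠ 0} = Fintype.card α ^ Fintype.card m - 1 := by
  classical
  rw [Nat.card_eq_fintype_card, Fintype.card_subtype_compl, Fintype.card_subtype_eq,
    Fintype.card_fun]

namespace Matrix

variable {K : Type*} [Field K] {m n : Type*}

theorem vecMulVec_eq_vecMulVec_iff {v v' : m → K} {w w' : n → K} (hv : v ≠ 0) (hw : w ≠ 0) :
    vecMulVec v' w' = vecMulVec v w ↔ ∃ c : Kˣ, v' = c • v ∧ w' = c⁻¹ • w := by
  refine ⟨fun h => ?_, fun ⟨c, hv', hw'⟩ => by simp [hv', hw']⟩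
  have hvw : ∀ i j, v' i * w' j = v i * w j := fun i j => by
    simpa [vecMulVec_apply] using congr($h i j)
  obtain ⟨i, hi⟩ : ∃ i, v i ≠ 0 := Function.ne_iff.mp hv
  obtain ⟨j, hj⟩ : ∃ j, w j ≠ 0 := Function.ne_iff.mp hw
  have hij : v' i * w' j ≠ 0 := hvw i j ▸ mul_ne_zero hi hj
  have hw'j : w' j ≠ 0 := right_ne_zero_of_mul hij
  refine ⟨Units.mk0 (w j / w' j) (div_ne_zero hj hw'j), funext fun k => ?_, funext fun l => ?_⟩
  · simp only [Pi.smul_apply, Units.smul_mk0, smul_eq_mul]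
    field_simp
    linear_combination hvw k j
  · simp only [Pi.smul_apply, Units.smul_def, Units.val_inv_eq_inv_val, Units.val_mk0, smul_eq_mul]
    field_simp
    apply mul_left_cancel₀ (left_ne_zero_of_mul hij)
    linear_combination w j * hvw i l - w l * hvw i j

variable [Fintype n]

theorem ne_zero_of_rank_eq_one {A : Matrix m n K} (h : A.rank = 1) : A ≠ 0 := by
  rintro rfl
  simp [rank_zero] at h

variable [DecidableEq n]

theorem rank_eq_zero_iff {A : Matrix m n K} : A.rank = 0 ↔ A = 0 := by
  rw [rank, Submodule.finrank_eq_zero, LinearMap.range_eq_bot, ← toLin'_apply',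
    LinearEquiv.map_eq_zero_iff]

theorem rank_vecMulVec_of_ne_zero {v : m → K} {w : n → K} (hv : v ≠ 0) (hw : w ≠ 0) :
    (vecMulVec v w).rank = 1 := by
  have : (vecMulVec v w).rank ≠ 0 := by
    obtain ⟨i, hi⟩ := Function.ne_iff.mp hv
    obtain ⟨j, hj⟩ := Function.ne_iff.mp hw
    exact fun h => mul_ne_zero hi hj congr($(rank_eq_zero_iff.mp h) i j)
  have := rank_vecMulVec_le v w
  omega

theorem exists_eq_vecMulVec_of_rank_eq_one {A : Matrix m n K} (h : A.rank = 1) :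
    ∃ v w, A = vecMulVec v w := by
  obtain ⟨⟨u, hu⟩, -, hspan⟩ := finrank_eq_one_iff'.mp h
  choose w hw using fun j => hspan ⟨A *ᵥ Pi.single j 1, Pi.single j 1, rfl⟩
  refine ⟨u, w, ext fun i j => ?_⟩
  simpa [mulVec_single, vecMulVec_apply, mul_comm] using
    (congrFun (congrArg Subtype.val (hw j)) i).symm

theorem rank_eq_one_iff {A : Matrix m n K} :
    A.rank = 1 ↔ ∃ v w, v ≠ 0 ∧ w ≠ 0 ∧ A = vecMulVec v w := by
  refine ⟨fun h => ?_, fun ⟨v, w, hv, hw, hA⟩ => hA ▸ rank_vecMulVec_of_ne_zero hv hw⟩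
  obtain ⟨v, w, rfl⟩ := exists_eq_vecMulVec_of_rank_eq_one h
  have := ne_zero_of_rank_eq_one h
  refine ⟨v, w, ?_, ?_, rfl⟩ <;> rintro rfl <;>
    exact this (ext fun _ _ => by simp [vecMulVec_apply])

theorem card_rank_eq_one_mul [Fintype K] [Fintype m] :
    Nat.card {A : Matrix m n K // A.rank = 1} * (Fintype.card K - 1) =
      (Fintype.card K ^ Fintype.card m - 1) * (Fintype.card K ^ Fintype.card n - 1) := by
  choose v w hv hw hA using fun A : {A : Matrix m n K // A.rank = 1} => rank_eq_one_iff.mp A.2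
  let f (p : {A : Matrix m n K // A.rank = 1} × Kˣ) :
      {v : m → K // v ≠ 0} × {w : n → K // w ≠ 0} :=
    (⟨p.2 • v p.1, (smul_ne_zero_iff_ne _).2 (hv p.1)⟩,
      ⟨p.2⁻¹ • w p.1, (smul_ne_zero_iff_ne _).2 (hw p.1)⟩)
  have hfactor (A : {A : Matrix m n K // A.rank = 1}) (c : Kˣ) :
      vecMulVec (c • v A) (c⁻¹ • w A) = A := by
    simp [hA A]
  have hf : f.Bijective := by
    refine ⟨fun ⟨A, c⟩ ⟨B, d⟩ h => ?_, fun ⟨⟨v', hv'⟩, ⟨w', hw'⟩⟩ => ?_⟩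
    · simp only [f, Prod.mk.injEq, Subtype.mk.injEq] at h
      obtain rfl : A = B := Subtype.ext <| by
        rw [← hfactor A c, ← hfactor B d, h.1, h.2]
      exact Prod.ext rfl <| Units.ext <| smul_left_injective K (hv A) <| by
        simpa only [Units.smul_def] using h.1
    · let A : {A : Matrix m n K // A.rank = 1} :=
        ⟨vecMulVec v' w', rank_vecMulVec_of_ne_zero hv' hw'⟩
      obtain ⟨c, hvc, hwc⟩ := (vecMulVec_eq_vecMulVec_iff (hv A) (hw A)).1 (hA A)
      exact ⟨(A, c), Prod.ext (Subtype.ext hvc.symm) (Subtype.ext hwc.symm)⟩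
  simpa only [Nat.card_prod, Nat.card_units, Nat.card_fun_ne_zero, Nat.card_eq_fintype_card] using
    Nat.card_congr (Equiv.ofBijective f hf)

end Matrix

section SumRank

variable {F : Type} [Field F] {t n m : ℕ}

theorem sumRankW_single (i : Fin t) (A : Matrix (Fin n) (Fin m) F) :
    sumRankW (Pi.single i A) = A.rank := by
  rw [sumRankW, Finset.sum_eq_single i (fun j _ hj => by simp [Pi.single_eq_of_ne hj, rank_zero])
    (by simp), Pi.single_eq_same]

theorem exists_eq_single_of_sumRankW_le_one {X : Fin t → Matrix (Fin n) (Fin m) F}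
    (hX : sumRankW X ≤ 1) (hX0 : X ≠ 0) : ∃ i, (X i).rank = 1 ∧ X = Pi.single i (X i) := by
  obtain ⟨i, hi⟩ := Function.ne_iff.mp hX0
  have hrank : (X i).rank ≠ 0 := mt rank_eq_zero_iff.mp hi
  rw [sumRankW, ← Finset.add_sum_erase _ _ (Finset.mem_univ i)] at hX
  have hsum : ∑ j ∈ Finset.univ.erase i, (X j).rank = 0 := by omega
  have hrest : ∀ j ≠ i, X j = 0 := fun j hj =>
    rank_eq_zero_iff.mp <| Finset.sum_eq_zero_iff.mp hsum j (by simp [hj])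
  refine ⟨i, by omega, funext fun j => ?_⟩
  rcases eq_or_ne j i with rfl | hj
  · simp
  · simp [Pi.single_eq_of_ne hj, hrest j hj]

theorem ballVol_one [Fintype F] :
    ballVol F t n m 1 = 1 + t * Nat.card {A : Matrix (Fin n) (Fin m) F // A.rank = 1} := by
  let f : Option (Fin t × {A : Matrix (Fin n) (Fin m) F // A.rank = 1}) →
      {X : Fin t → Matrix (Fin n) (Fin m) F // sumRankW X ≤ 1}
    | none => ⟨0, by simp [sumRankW, rank_zero]⟩
    | some (i, A) => ⟨Pi.single i A, (sumRankW_single i A.1).trans_le A.2.le⟩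
  have hf : f.Bijective := by
    refine ⟨?_, fun ⟨X, hX⟩ => ?_⟩
    · rintro (_ | ⟨i, A⟩) (_ | ⟨j, B⟩) h <;> simp only [f, Subtype.mk.injEq] at h
      · rfl
      · exact absurd (Pi.single_eq_zero_iff.mp h.symm) (ne_zero_of_rank_eq_one B.2)
      · exact absurd (Pi.single_eq_zero_iff.mp h) (ne_zero_of_rank_eq_one A.2)
      · obtain rfl : i = j := by
          by_contra hij
          exact ne_zero_of_rank_eq_one A.2 (by simpa [Pi.single_eq_of_ne hij] using congrFun h i)
        exact congrArg some (Prod.ext rfl (Subtype.ext (Pi.single_injective i h)))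
    · by_cases hX0 : X = 0
      · exact ⟨none, Subtype.ext hX0.symm⟩
      · obtain ⟨i, hi, hXi⟩ := exists_eq_single_of_sumRankW_le_one hX hX0
        exact ⟨some (i, ⟨X i, hi⟩), Subtype.ext hXi.symm⟩
  rw [ballVol, ← Nat.card_congr (Equiv.ofBijective f hf), Finite.card_option, Nat.card_prod,
    Nat.card_fin, add_comm]

end SumRank

theorem Nat.dvd_of_le_of_dvd_prime_pow {p a b i j : ℕ} (hp : p.Prime) (ha : a ∣ p ^ i)
    (hb : b ∣ p ^ j) (hab : a ≤ b) : a ∣ b := by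
  obtain ⟨r, -, rfl⟩ := (Nat.dvd_prime_pow hp).1 ha
  obtain ⟨s, -, rfl⟩ := (Nat.dvd_prime_pow hp).1 hb
  exact pow_dvd_pow p ((Nat.pow_le_pow_iff_right hp.one_lt).1 hab)

theorem sq_dvd_sub_one_add {R : Type*} [CommRing R] {q t V : R} {n : ℕ} (hn : 2 ≤ n)
    (hV : V * (q - 1) = q - 1 + t * (q ^ n - 1) ^ 2) (hqV : q ^ 2 ∣ V) : q ^ 2 ∣ q - 1 + t := by
  have : q - 1 + t = V * (q - 1) - t * q ^ n * (q ^ n - 2) := by rw [hV]; ring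
  rw [this]
  exact (hqV.mul_right _).sub (((pow_dvd_pow q hn).mul_left t).mul_right _)

theorem sq_lt_of_mul_sub_one_eq {q R : ℤ} {n : ℕ} (hq : 2 ≤ q) (hn : 2 ≤ n)
    (hR : R * (q - 1) = (q ^ n - 1) ^ 2) : q ^ 2 < R := by
  have hsq : (q ^ 2 - 1) ^ 2 ≤ (q ^ n - 1) ^ 2 :=
    pow_le_pow_left₀ (by nlinarith) (by linarith [pow_le_pow_right₀ (by omega : 1 ≤ q) hn]) 2
  by_contra! hRq
  have := mul_le_mul_of_nonneg_right hRq (by omega : (0 : ℤ) ≤ q - 1)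
  nlinarith [mul_pos (by positivity : (0 : ℤ) < q ^ 2) (by nlinarith : (0 : ℤ) < q ^ 2 - q - 1)]

theorem stmt_8 (F : Type) [Field F] [Fintype F] (q t n : ℕ)
    (hq : Fintype.card F = q) (ht : 1 ≤ t) (hn : 2 ≤ n) (hqt : t + 1 < q) :
    ¬ ∃ (C : Submodule F (Fin t → Matrix (Fin n) (Fin n) F)) (d : ℕ),
        IsMinDist C d ∧ IsPerfect F C d ∧ (d - 1) / 2 = 1 := by
  rintro ⟨C, d, -, hperf, hd⟩
  obtain ⟨p, -, e, hp, hpe⟩ := FiniteField.card' F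
  set R := Nat.card {A : Matrix (Fin n) (Fin n) F // A.rank = 1}
  have hV : 1 + t * R ∣ p ^ (e * Module.finrank F (Fin t → Matrix (Fin n) (Fin n) F)) := by
    rw [IsPerfect, hd, ballVol_one, Nat.card_eq_fintype_card (α := Fin t → _),
      Module.card_eq_pow_finrank (K := F), hpe, ← pow_mul] at hperf
    exact Dvd.intro_left _ hperf
  have hR : (R : ℤ) * (q - 1) = (q ^ n - 1) ^ 2 := by
    have hcount : R * (q - 1) = (q ^ n - 1) * (q ^ n - 1) := by
      simpa only [hq, Fintype.card_fin] using
        card_rank_eq_one_mul (K := F) (m := Fin n) (n := Fin n)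
    have : 1 ≤ q ^ n := Nat.one_le_pow _ _ (by omega)
    zify [this, (by omega : 1 ≤ q)] at hcount
    linear_combination hcount
  have hsq : q ^ 2 ∣ 1 + t * R := by
    refine Nat.dvd_of_le_of_dvd_prime_pow hp (by rw [← hq, hpe, ← pow_mul]) hV ?_
    have hRq := sq_lt_of_mul_sub_one_eq (by omega) hn hR
    zify
    nlinarith
  have hdvd := sq_dvd_sub_one_add (V := ((1 + t * R : ℕ) : ℤ)) hn
    (by push_cast; rw [← hR]; ring) (by exact_mod_cast hsq)
  have hle := Int.le_of_dvd (by omega) hdvd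
  nlinarith
end

section
/- Let q = 2, t ≥ 1 and n ≥ 2 integers, and M = (𝔽_2^{n×n})^t. If 4 does not divide t − 2 and 4 does not divide t − 1 (as integers), then there exists no perfect linear sum-rank code in M with minimum distance d ∈ {5, 6}. -/
/-!
The 2-group of pairs `(u, v)` of unitriangular matrices acts on the sum-rank ball of radius 2
by `X ↦ u X v⁻¹` without changing ranks, so the volume `V₂` of the ball is congruent mod 2 to the
number of fixed tuples. A matrix fixed by this action is a multiple of the corner matrix unit
`E₀,ₙ₋₁`, so the fixed tuples form a copy of the Hamming ball of radius 2 in `𝔽₂ᵗ`, and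
`V₂ ≡ 1 + t + C(t, 2) (mod 2)`, which is odd exactly when `t ≡ 0, 3 (mod 4)`. A perfect code
would make the odd number `V₂ > 1` divide `|M| = 2^(tn²)`.
-/

open Matrix

open Finset

theorem IsPGroup.prod {p : ℕ} {G H : Type*} [Group G] [Group H] (hG : IsPGroup p G)
    (hH : IsPGroup p H) : IsPGroup p (G × H) := by
  rintro ⟨g, h⟩
  obtain ⟨k, hk⟩ := hG g
  obtain ⟨l, hl⟩ := hH h
  refine ⟨k + l, Prod.ext ?_ ?_⟩
  · simp [pow_add, pow_mul, hk]
  · simp [pow_add, pow_mul', hl]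

namespace Matrix

variable {R : Type*} [CommRing R] {n m : ℕ}

def strictUpperTriangular (n : ℕ) (R : Type*) [CommRing R] :
    NonUnitalSubring (Matrix (Fin n) (Fin n) R) where
  carrier := {N | ∀ i j, j ≤ i → N i j = 0}
  add_mem' hA hB i j hij := by simp [hA i j hij, hB i j hij]
  zero_mem' _ _ _ := rfl
  neg_mem' hA i j hij := by simp [hA i j hij]
  mul_mem' {A B} hA hB i j hij := by
    rw [mul_apply]
    refine Finset.sum_eq_zero fun k _ => ?_
    rcases le_or_gt k i with hki | hik
    · rw [hA i k hki, zero_mul]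
    · rw [hB k j (hij.trans hik.le), mul_zero]

lemma pow_apply_eq_zero_of_mem_strictUpperTriangular {N : Matrix (Fin n) (Fin n) R}
    (hN : N ∈ strictUpperTriangular n R) (k : ℕ) {i j : Fin n} (hij : (j : ℕ) < i + k) :
    (N ^ k) i j = 0 := by
  induction k generalizing j with
  | zero => exact one_apply_ne (by rintro rfl; omega)
  | succ k ih =>
    rw [pow_succ, mul_apply]
    refine Finset.sum_eq_zero fun l _ => ?_
    rcases lt_or_ge (l : ℕ) (i + k) with hl | hl
    · rw [ih hl, zero_mul]
    · rw [hN l j (Fin.le_def.2 (by omega)), mul_zero]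

lemma pow_card_eq_zero_of_mem_strictUpperTriangular {N : Matrix (Fin n) (Fin n) R}
    (hN : N ∈ strictUpperTriangular n R) : N ^ n = 0 := by
  ext i j
  exact pow_apply_eq_zero_of_mem_strictUpperTriangular hN n (by omega)

lemma pow_succ_mem_strictUpperTriangular {N : Matrix (Fin n) (Fin n) R}
    (hN : N ∈ strictUpperTriangular n R) (k : ℕ) : N ^ (k + 1) ∈ strictUpperTriangular n R := by
  induction k with
  | zero => simpa using hN
  | succ k ih => rw [pow_succ]; exact mul_mem ih hN

/-- Inverse of `1 + N` is the geometric series in `-N`, which terminates. -/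
lemma inv_sub_one_mem_strictUpperTriangular {u : GL (Fin n) R}
    (hu : (u : Matrix (Fin n) (Fin n) R) - 1 ∈ strictUpperTriangular n R) :
    ((u⁻¹ : GL (Fin n) R) : Matrix (Fin n) (Fin n) R) - 1 ∈ strictUpperTriangular n R := by
  set N := (u : Matrix (Fin n) (Fin n) R) - 1
  have hneg : -N ∈ strictUpperTriangular n R := neg_mem hu
  have hinv : ((u⁻¹ : GL (Fin n) R) : Matrix (Fin n) (Fin n) R)
      = ∑ k ∈ range (n + 1), (-N) ^ k := by
    refine Units.inv_eq_of_mul_eq_one_left ?_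
    have hu1 : (u : Matrix (Fin n) (Fin n) R) = 1 - -N := by simp [N]
    rw [hu1, geom_sum_mul_neg, pow_succ, pow_card_eq_zero_of_mem_strictUpperTriangular hneg,
      zero_mul, sub_zero]
  rw [hinv, sum_range_succ', pow_zero, add_sub_cancel_right]
  exact sum_mem fun k _ => pow_succ_mem_strictUpperTriangular hneg k

def unitriangular (n : ℕ) (R : Type*) [CommRing R] : Subgroup (GL (Fin n) R) where
  carrier := {u | (u : Matrix (Fin n) (Fin n) R) - 1 ∈ strictUpperTriangular n R}
  one_mem' := by simp [zero_mem]
  mul_mem' {u v} hu hv := by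
    have h : ((u * v : GL (Fin n) R) : Matrix (Fin n) (Fin n) R) - 1 =
        (u - 1) * (v - 1) + (u - 1) + (v - 1) := by
      rw [Units.val_mul]; noncomm_ring
    change _ ∈ strictUpperTriangular n R
    rw [h]
    exact add_mem (add_mem (mul_mem hu hv) hu) hv
  inv_mem' := inv_sub_one_mem_strictUpperTriangular

theorem isPGroup_unitriangular (p : ℕ) [Fact p.Prime] [CharP R p] :
    IsPGroup p (unitriangular n R) := by
  rintro ⟨u, hu⟩
  refine ⟨n, Subtype.ext (Units.ext ?_)⟩
  rcases isEmpty_or_nonempty (Fin n) with _ | _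
  · exact Subsingleton.elim _ _
  · have hN := pow_card_eq_zero_of_mem_strictUpperTriangular hu
    have hu1 : (u : Matrix (Fin n) (Fin n) R) = 1 + (u - 1) := by abel
    simp only [Subgroup.coe_pow, Units.val_pow_eq_pow_val, OneMemClass.coe_one, Units.val_one]
    rw [hu1, add_pow_char_pow_of_commute p n (Commute.one_left _), one_pow,
      pow_eq_zero_of_le (Nat.lt_pow_self (Fact.out : p.Prime).one_lt).le hN, add_zero]

section Action

variable {ι κ : Type*} [Fintype ι] [DecidableEq ι] [Fintype κ] [DecidableEq κ]

instance : MulAction (GL ι R × GL κ R) (Matrix ι κ R) where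
  smul g X := (g.1 : Matrix ι ι R) * X * ((g.2⁻¹ : GL κ R) : Matrix κ κ R)
  one_smul X := by simp [HSMul.hSMul]
  mul_smul g h X := by
    simp only [HSMul.hSMul, Prod.fst_mul, Prod.snd_mul, _root_.mul_inv_rev, Units.val_mul,
      Matrix.mul_assoc]

lemma gl_prod_smul_def (g : GL ι R × GL κ R) (X : Matrix ι κ R) :
    g • X = (g.1 : Matrix ι ι R) * X * ((g.2⁻¹ : GL κ R) : Matrix κ κ R) := rfl

lemma rank_gl_prod_smul (g : GL ι R × GL κ R) (X : Matrix ι κ R) : (g • X).rank = X.rank := by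
  rw [gl_prod_smul_def, rank_mul_eq_left_of_isUnit_det _ _ (isUnit_det_of_invertible _),
    rank_mul_eq_right_of_isUnit_det _ _ (isUnit_det_of_invertible _)]

end Action

lemma apply_eq_one_apply_of_mem_unitriangular {u : GL (Fin n) R} (hu : u ∈ unitriangular n R)
    {i j : Fin n} (hji : j ≤ i) :
    (u : Matrix (Fin n) (Fin n) R) i j = (1 : Matrix (Fin n) (Fin n) R) i j :=
  sub_eq_zero.1 (hu i j hji)

lemma unitriangular_mul_single_zero {κ : Type*} [DecidableEq κ] {u : GL (Fin (n + 1)) R}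
    (hu : u ∈ unitriangular (n + 1) R) (j : κ) (c : R) :
    (u : Matrix (Fin (n + 1)) (Fin (n + 1)) R) * single (0 : Fin (n + 1)) j c = single 0 j c := by
  ext i l
  by_cases hl : l = j
  · subst hl
    rw [mul_single_apply_same, apply_eq_one_apply_of_mem_unitriangular hu (Fin.zero_le i),
      single_apply, one_apply]
    rcases eq_or_ne i 0 with rfl | hi
    · simp
    · simp [hi, hi.symm]
  · rw [mul_single_apply_of_ne _ _ _ _ _ hl, single_apply_of_col_ne _ _ (Ne.symm hl)]

lemma single_last_mul_unitriangular {ι : Type*} [DecidableEq ι] {v : GL (Fin (m + 1)) R}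
    (hv : v ∈ unitriangular (m + 1) R) (i : ι) (c : R) :
    single i (Fin.last m) c * (v : Matrix (Fin (m + 1)) (Fin (m + 1)) R) =
      single i (Fin.last m) c := by
  ext k l
  by_cases hk : k = i
  · subst hk
    rw [single_mul_apply_same, apply_eq_one_apply_of_mem_unitriangular hv (Fin.le_last l),
      single_apply, one_apply]
    by_cases hl : Fin.last m = l <;> simp [hl]
  · rw [single_mul_apply_of_ne _ _ _ _ _ hk, single_apply_of_row_ne (Ne.symm hk)]

lemma exists_mem_unitriangular_val_eq_transvection {i j : Fin n} (hij : i < j) (c : R) :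
    ∃ u ∈ unitriangular n R, (u : Matrix (Fin n) (Fin n) R) = transvection i j c := by
  have hinv : ∀ d : R, transvection i j d * transvection i j (-d) = 1 := fun d => by
    rw [transvection_mul_transvection_same i j hij.ne, add_neg_cancel, transvection_zero]
  refine ⟨⟨transvection i j c, transvection i j (-c), hinv c, by simpa using hinv (-c)⟩,
    fun k l hlk => ?_, rfl⟩
  show (transvection i j c - 1) k l = 0
  rw [transvection, add_sub_cancel_left, single_apply, if_neg]
  rintro ⟨rfl, rfl⟩
  exact absurd hlk (not_le.2 hij)

abbrev unitriangularPair (n m : ℕ) (R : Type*) [CommRing R] :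
    Subgroup (GL (Fin (n + 1)) R × GL (Fin (m + 1)) R) :=
  (unitriangular (n + 1) R).prod (unitriangular (m + 1) R)

theorem isPGroup_unitriangularPair (p : ℕ) [Fact p.Prime] [CharP R p] (n m : ℕ) :
    IsPGroup p (unitriangularPair n m R) :=
  ((isPGroup_unitriangular p).prod (isPGroup_unitriangular p)).of_equiv
    (Subgroup.prodEquiv _ _).symm

theorem forall_smul_eq_iff_eq_single (X : Matrix (Fin (n + 1)) (Fin (m + 1)) R) :
    (∀ g ∈ unitriangularPair n m R, g • X = X) ↔
      X = single 0 (Fin.last m) (X 0 (Fin.last m)) := by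
  constructor
  · intro hX
    have hrow : ∀ b, b ≠ 0 → ∀ l, X b l = 0 := by
      intro b hb l
      obtain ⟨u, hu, hu'⟩ := exists_mem_unitriangular_val_eq_transvection (Fin.pos_of_ne_zero hb)
        (1 : R)
      have h := hX (u, 1) (Subgroup.mem_prod.2 ⟨hu, one_mem _⟩)
      rw [gl_prod_smul_def, hu', transvection, inv_one, Units.val_one, Matrix.mul_one,
        Matrix.add_mul, Matrix.one_mul, add_eq_left] at h
      simpa using congrFun (congrFun h 0) l
    have hcol : ∀ a, a ≠ Fin.last m → ∀ k, X k a = 0 := by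
      intro a ha k
      obtain ⟨v, hv, hv'⟩ := exists_mem_unitriangular_val_eq_transvection
        (Fin.lt_last_iff_ne_last.2 ha) (1 : R)
      have h := hX (1, v⁻¹) (Subgroup.mem_prod.2 ⟨one_mem _, inv_mem hv⟩)
      rw [gl_prod_smul_def, inv_inv, hv', transvection, Units.val_one, Matrix.one_mul,
        Matrix.mul_add, Matrix.mul_one, add_eq_left] at h
      simpa using congrFun (congrFun h k) (Fin.last m)
    ext k l
    rw [single_apply]
    split_ifs with h
    · rw [h.1, h.2]
    · rcases eq_or_ne k 0 with rfl | hk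
      · exact hcol l (fun hl => h ⟨rfl, hl.symm⟩) 0
      · exact hrow k hk l
  · rintro hX ⟨u, v⟩ ⟨hu, hv⟩
    rw [hX, gl_prod_smul_def, unitriangular_mul_single_zero hu,
      single_last_mul_unitriangular (inv_mem hv)]

lemma rank_single {F : Type*} [Field F] [DecidableEq F] {ι κ : Type*} [Fintype ι]
    [DecidableEq ι] [Fintype κ] [DecidableEq κ] (i : ι) (j : κ) (c : F) :
    (single i j c).rank = if c = 0 then 0 else 1 := by
  split_ifs with hc
  · rw [hc, single_zero, rank_zero]
  have hvec : single i j c = vecMulVec (Pi.single i c) (Pi.single j 1) := by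
    ext k l
    by_cases hk : i = k <;> by_cases hl : j = l <;>
      simp [vecMulVec_apply, hk, hl, eq_comm]
  refine le_antisymm (hvec ▸ rank_vecMulVec_le _ _) (Module.finrank_pos_iff_exists_ne_zero.2
    ⟨⟨_, LinearMap.mem_range_self _ (Pi.single j 1)⟩, fun h => hc ?_⟩)
  simpa [Pi.single_apply] using congrFun (congrArg Subtype.val h) i

end Matrix

section SumRank

variable {F : Type} [Field F] {t n m : ℕ}

lemma sumRankW_smul (g : GL (Fin n) F × GL (Fin m) F) (X : Fin t → Matrix (Fin n) (Fin m) F) :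
    sumRankW (g • X) = sumRankW X :=
  Finset.sum_congr rfl fun i _ => rank_gl_prod_smul g (X i)

lemma sumRankW_single_s10 [DecidableEq F] (i : Fin n) (j : Fin m) (c : Fin t → F) :
    sumRankW (fun k => single i j (c k)) = hammingNorm c := by
  simp only [sumRankW, rank_single, hammingNorm, Finset.card_filter, ite_not]

variable (F t n m) in
def sumRankBall (r : ℕ) :
    SubMulAction (GL (Fin n) F × GL (Fin m) F) (Fin t → Matrix (Fin n) (Fin m) F) where
  carrier := {X | sumRankW X ≤ r}
  smul_mem' g X hX := by simpa [sumRankW_smul] using hX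

lemma mem_fixedPoints_sumRankBall_iff {r : ℕ} (X : sumRankBall F t (n + 1) (m + 1) r) :
    X ∈ MulAction.fixedPoints (unitriangularPair n m F) (sumRankBall F t (n + 1) (m + 1) r) ↔
      ∀ i, X.1 i = single 0 (Fin.last m) (X.1 i 0 (Fin.last m)) := by
  simp only [MulAction.mem_fixedPoints, ← forall_smul_eq_iff_eq_single, Subtype.forall]
  constructor
  · intro h i g hg
    exact congrFun (congrArg Subtype.val (h g hg)) i
  · intro h g hg
    exact Subtype.ext (funext fun i => h i g hg)

def fixedPointsSumRankBallEquiv [DecidableEq F] (r : ℕ) :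
    MulAction.fixedPoints (unitriangularPair n m F) (sumRankBall F t (n + 1) (m + 1) r) ≃
      {c : Fin t → F // hammingNorm c ≤ r} where
  toFun X := ⟨fun i => X.1.1 i 0 (Fin.last m), by
    have hX : X.1.1 = fun i => single 0 (Fin.last m) (X.1.1 i 0 (Fin.last m)) :=
      funext ((mem_fixedPoints_sumRankBall_iff X.1).1 X.2)
    rw [← sumRankW_single_s10 (0 : Fin (n + 1)) (Fin.last m), ← hX]
    exact X.1.2⟩
  invFun c := ⟨⟨fun i => single 0 (Fin.last m) (c.1 i), by
      change sumRankW _ ≤ r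
      rw [sumRankW_single_s10]
      exact c.2⟩,
    (mem_fixedPoints_sumRankBall_iff _).2 fun i => by simp⟩
  left_inv X :=
    Subtype.ext (Subtype.ext (funext ((mem_fixedPoints_sumRankBall_iff X.1).1 X.2)).symm)
  right_inv c := by ext; simp

end SumRank

section Volume

variable {F : Type} [Field F] [Fintype F] [DecidableEq F] {t n m : ℕ}

theorem ballVol_modEq_card_hammingBall (p : ℕ) [Fact p.Prime] [CharP F p] (r : ℕ) :
    ballVol F t (n + 1) (m + 1) r ≡ Nat.card {c : Fin t → F // hammingNorm c ≤ r} [MOD p] :=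
  calc ballVol F t (n + 1) (m + 1) r = Nat.card (sumRankBall F t (n + 1) (m + 1) r) := rfl
    _ ≡ Nat.card (MulAction.fixedPoints (unitriangularPair n m F)
          (sumRankBall F t (n + 1) (m + 1) r)) [MOD p] :=
      (isPGroup_unitriangularPair p n m).card_modEq_card_fixedPoints _
    _ = Nat.card {c : Fin t → F // hammingNorm c ≤ r} :=
      Nat.card_congr (fixedPointsSumRankBallEquiv r)

theorem card_hammingBall_le_ballVol (r : ℕ) :
    Nat.card {c : Fin t → F // hammingNorm c ≤ r} ≤ ballVol F t (n + 1) (m + 1) r :=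
  (Nat.card_congr (fixedPointsSumRankBallEquiv (n := n) (m := m) r)).symm.trans_le
    (Finite.card_subtype_le _)

end Volume

theorem card_finset_card_le (α : Type*) [Fintype α] (r : ℕ) :
    Nat.card {s : Finset α // #s ≤ r} = ∑ k ∈ range (r + 1), (Fintype.card α).choose k := by
  classical
  rw [Nat.card_eq_fintype_card, Fintype.card_subtype,
    card_eq_sum_card_fiberwise (f := Finset.card) (t := range (r + 1))
      (fun s hs => by simpa [Nat.lt_succ_iff] using hs)]
  refine sum_congr rfl fun k hk => ?_
  rw [filter_filter, ← Fintype.card_finset_len, Fintype.card_subtype]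
  congr 1
  ext s
  simp only [mem_filter, mem_univ, true_and, and_iff_right_iff_imp]
  rintro rfl
  simpa [Nat.lt_succ_iff] using hk

def zmodTwoFunEquivFinset (ι : Type*) [Fintype ι] [DecidableEq ι] :
    (ι → ZMod 2) ≃ Finset ι where
  toFun c := {i | c i ≠ 0}
  invFun s i := if i ∈ s then 1 else 0
  left_inv c := funext fun i => by
    have : ∀ a : ZMod 2, (if a ≠ 0 then 1 else 0) = a := by decide
    simpa using this (c i)
  right_inv s := by ext; simp

theorem card_hammingBall_zmod_two (t r : ℕ) :
    Nat.card {c : Fin t → ZMod 2 // hammingNorm c ≤ r} = ∑ k ∈ range (r + 1), t.choose k := by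
  have h := card_finset_card_le (Fin t) r
  rw [Fintype.card_fin] at h
  rw [← h]
  exact Nat.card_congr ((zmodTwoFunEquivFinset (Fin t)).subtypeEquiv fun _ => Iff.rfl)

theorem Nat.add_four_choose_two (t : ℕ) : (t + 4).choose 2 = t.choose 2 + 4 * t + 6 := by
  simp [Nat.choose_succ_succ, Nat.choose_one_right]; omega

theorem odd_sum_range_three_choose {t : ℕ} (h1 : t % 4 ≠ 1) (h2 : t % 4 ≠ 2) :
    Odd (∑ k ∈ Finset.range 3, t.choose k) := by
  induction t using Nat.strong_induction_on with
  | _ t ih =>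
    rcases lt_or_ge t 4 with ht | ht
    · interval_cases t <;> simp_all [Finset.sum_range_succ, Nat.odd_iff]
    · obtain ⟨s, rfl⟩ : ∃ s, t = s + 4 := ⟨t - 4, by omega⟩
      have := ih s (by omega) (by omega) (by omega)
      simp only [Finset.sum_range_succ, Finset.sum_range_zero, Nat.add_four_choose_two] at this ⊢
      simp only [Nat.choose_zero_right, Nat.choose_one_right] at this ⊢
      obtain ⟨a, ha⟩ := this
      exact ⟨a + 2 * s + 5, by omega⟩

theorem stmt_10 (t n : ℕ) (ht : 1 ≤ t) (hn : 2 ≤ n)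
    (ht2 : ¬ (4 : ℤ) ∣ ((t : ℤ) - 2)) (ht1 : ¬ (4 : ℤ) ∣ ((t : ℤ) - 1)) :
    ¬ ∃ (C : Submodule (ZMod 2) (Fin t → Matrix (Fin n) (Fin n) (ZMod 2))) (d : ℕ),
        IsMinDist C d ∧ IsPerfect (ZMod 2) C d ∧ (d = 5 ∨ d = 6) := by
  rintro ⟨C, d, -, hperf, hd⟩
  obtain ⟨n, rfl⟩ : ∃ k, n = k + 1 := ⟨n - 1, by omega⟩
  have hrad : (d - 1) / 2 = 2 := by rcases hd with rfl | rfl <;> rfl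
  have hcard : Nat.card (Fin t → Matrix (Fin (n + 1)) (Fin (n + 1)) (ZMod 2)) =
      2 ^ ((n + 1) * (n + 1) * t) := by
    simp [Nat.card_eq_fintype_card, Matrix, pow_mul]
  rw [IsPerfect, hrad, hcard] at hperf
  set V := ballVol (ZMod 2) t (n + 1) (n + 1) 2
  have hV : V ≡ ∑ k ∈ Finset.range 3, t.choose k [MOD 2] :=
    card_hammingBall_zmod_two t 2 ▸ ballVol_modEq_card_hammingBall 2 2
  have hodd : Odd V := by
    rw [Nat.odd_iff, hV, ← Nat.odd_iff]
    exact odd_sum_range_three_choose (by omega) (by omega)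
  have hV1 : V = 1 :=
    ((Nat.coprime_two_right.2 hodd).pow_right _).eq_one_of_dvd (Dvd.intro_left _ hperf)
  have hlow : 1 < V := calc
    1 < ∑ k ∈ Finset.range 3, t.choose k := by simp [Finset.sum_range_succ]; omega
    _ = Nat.card {c : Fin t → ZMod 2 // hammingNorm c ≤ 2} :=
      (card_hammingBall_zmod_two t 2).symm
    _ ≤ V := card_hammingBall_le_ballVol 2
  omega
end

section
/- Let q be a prime power, t ≥ 1 and n ≥ 2 integers, and M = (𝔽_q^{n×n})^t. For every integer k ≥ 0, the ball volume satisfies the congruence V_k ≡ 1 + Σ_{i=1}^{k} (−1)^i · binom(t, i) (mod q), as an identity of integers modulo q (binom denotes the ordinary binomial coefficient, with binom(t,i) = 0 for i > t). -/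
open Matrix

/-! Row shears `Xᵢ ↦ (1 + c • E_{pj}) Xᵢ`, `c ∈ 𝔽_q`, preserve ranks, and the tuples they move
fall into orbits of size `q`. So modulo `q` the ball may be replaced by its fixed points, the
tuples whose `j`-th rows vanish. Clearing every row but the `p`-th, and then (transposing) every
column but the `p`-th, leaves the tuples `(xᵢ E_{pp})ᵢ`, whose sum-rank weight is the Hamming
weight of `x ∈ 𝔽_qᵗ`. The Hamming ball has `∑_{w ≤ k} C(t, w) (q - 1)ʷ ≡ ∑_{w ≤ k} (-1)ʷ C(t, w)`
elements. -/

open Finset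

section ShearOrbits

variable {R M : Type*} [Ring R] [IsDomain R] [AddCommGroup M] [Module R M]
  [Module.IsTorsionFree R M]

theorem card_dvd_of_add_smul_mem {y : M} (hy : y ≠ 0) {A : Set M}
    (hA : ∀ x ∈ A, ∀ c : R, x + c • y ∈ A) : Nat.card R ∣ Nat.card A := by
  set L := (R ∙ y).toAddSubgroup
  have hsat : QuotientAddGroup.mk ⁻¹' (QuotientAddGroup.mk '' A : Set (M ⧸ L)) = A := by
    refine Set.Subset.antisymm ?_ (Set.subset_preimage_image _ _)
    rintro x ⟨a, ha, hax⟩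
    obtain ⟨c, hc⟩ := Submodule.mem_span_singleton.mp (QuotientAddGroup.eq.mp hax)
    simpa [hc] using hA a ha c
  have hL : Nat.card L = Nat.card R :=
    (Nat.card_congr (LinearEquiv.toSpanNonzeroSingleton R M y hy).toEquiv).symm
  rw [← hsat, Nat.card_congr (QuotientAddGroup.preimageMkEquivAddSubgroupProdSet L _),
    Nat.card_prod, hL]
  exact dvd_mul_right _ _

/-- `S` is the union of the fibres of `v`; by `hv`, the fibre over `y ≠ 0` is stable under
translation by `R • y`, so its size is divisible by `|R|`. -/
theorem card_modEq_card_zeros [Finite M] (v : M → M) (hv : ∀ x (c : R), v (x + c • v x) = v x)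
    (S : Set M) (hS : ∀ x ∈ S, ∀ c : R, x + c • v x ∈ S) :
    Nat.card S ≡ Nat.card ↥{x ∈ S | v x = 0} [MOD Nat.card R] := by
  have := Fintype.ofFinite M
  have hfibers : Nat.card S = ∑ y, Nat.card ↥{x ∈ S | v x = y} := by
    rw [← Nat.card_sigma]
    exact Nat.card_congr ((Equiv.sigmaFiberEquiv fun x : S ↦ v x).symm.trans
      (Equiv.sigmaCongrRight fun y ↦ Equiv.subtypeSubtypeEquivSubtypeInter (· ∈ S) (v · = y)))
  rw [hfibers]
  refine Nat.sum_modEq_single (fun h ↦ (h (mem_univ _)).elim) fun y _ hy ↦ ?_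
  refine Nat.modEq_zero_iff_dvd.mpr (card_dvd_of_add_smul_mem hy fun x ⟨hxS, hxy⟩ c ↦ ?_)
  subst hxy
  exact ⟨hS x hxS c, hv x c⟩

end ShearOrbits

section HammingBall

variable {ι β : Type*} [Fintype ι] [DecidableEq ι] [Fintype β] [DecidableEq β] [Zero β]

theorem card_filter_support_eq (s : Finset ι) :
    #{x : ι → β | ({i | x i ≠ 0} : Finset ι) = s} = (Fintype.card β - 1) ^ #s := by
  have hpi : ({x : ι → β | ({i | x i ≠ 0} : Finset ι) = s} : Finset _) =
      Fintype.piFinset fun i ↦ if i ∈ s then {0}ᶜ else {0} := by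
    ext x
    simp only [mem_filter, mem_univ, true_and, Finset.ext_iff, Fintype.mem_piFinset]
    refine forall_congr' fun i ↦ ?_
    split_ifs with hi <;> simp [hi]
  rw [hpi, Fintype.card_piFinset]
  simp [apply_ite, prod_ite_mem, card_compl]

theorem card_hammingNorm_eq (w : ℕ) :
    #{x : ι → β | hammingNorm x = w} = (Fintype.card ι).choose w * (Fintype.card β - 1) ^ w := by
  rw [card_eq_sum_card_fiberwise (s := {x : ι → β | hammingNorm x = w})
    (f := fun x : ι → β ↦ ({i | x i ≠ 0} : Finset ι)) (t := powersetCard w univ)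
    fun x hx ↦ mem_powersetCard_univ.mpr (mem_filter.mp hx).2]
  rw [sum_congr rfl fun s hs ↦ ?_, sum_const, card_powersetCard, card_univ, smul_eq_mul]
  rw [filter_filter, ← (mem_powersetCard_univ.mp hs), ← card_filter_support_eq s]
  congr 1
  exact filter_congr fun x _ ↦ ⟨And.right, fun h ↦ ⟨congrArg card h, h⟩⟩

theorem card_hammingNorm_le (k : ℕ) :
    Nat.card {x : ι → β // hammingNorm x ≤ k} =
      ∑ w ∈ range (k + 1), (Fintype.card ι).choose w * (Fintype.card β - 1) ^ w := by
  rw [Nat.card_eq_fintype_card, Fintype.card_subtype, card_eq_sum_card_fiberwise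
    (f := hammingNorm) (t := range (k + 1)) fun x hx ↦ mem_range_succ_iff.mpr (mem_filter.mp hx).2]
  refine sum_congr rfl fun w hw ↦ ?_
  rw [filter_filter, ← card_hammingNorm_eq]
  congr 1
  exact filter_congr fun x _ ↦ ⟨And.right, fun h ↦ ⟨h ▸ mem_range_succ_iff.mp hw, h⟩⟩

end HammingBall

section RestrictedBall

variable {F : Type} [Field F] {t n : ℕ}

def restrictedBall (k : ℕ) (R C : Finset (Fin n)) : Set (Fin t → Matrix (Fin n) (Fin n) F) :=
  {X | sumRankW X ≤ k ∧ ∀ i a b, (a ∈ R ∨ b ∈ C) → X i a b = 0}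

theorem restrictedBall_empty (k : ℕ) :
    restrictedBall (F := F) (t := t) (n := n) k ∅ ∅ = {X | sumRankW X ≤ k} := by
  simp [restrictedBall]

theorem sumRankW_transpose {m : ℕ} (X : Fin t → Matrix (Fin n) (Fin m) F) :
    sumRankW (fun i ↦ (X i)ᵀ) = sumRankW X := by
  simp only [sumRankW, rank_transpose]

theorem card_restrictedBall_comm (k : ℕ) (R C : Finset (Fin n)) :
    Nat.card (restrictedBall (F := F) (t := t) k R C) =
      Nat.card (restrictedBall (F := F) (t := t) k C R) := by
  let transposeAll : Function.End (Fin t → Matrix (Fin n) (Fin n) F) := fun X i ↦ (X i)ᵀ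
  refine Nat.card_congr <| (Function.Involutive.toPerm transposeAll fun X ↦ rfl).subtypeEquiv
    fun X ↦ and_congr (by rw [← sumRankW_transpose X]; rfl) ?_
  exact ⟨fun h i a b hab ↦ h i b a hab.symm, fun h i a b hab ↦ h i b a hab.symm⟩

theorem card_restrictedBall_modEq_insert [Fintype F] {k : ℕ} {R : Finset (Fin n)}
    (C : Finset (Fin n)) {p j : Fin n} (hp : p ∉ R) (hj : p ≠ j) :
    Nat.card (restrictedBall (F := F) (t := t) k R C) ≡
      Nat.card (restrictedBall (F := F) (t := t) k (insert j R) C) [MOD Nat.card F] := by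
  set E : Matrix (Fin n) (Fin n) F := single p j 1
  set v : (Fin t → Matrix (Fin n) (Fin n) F) → (Fin t → Matrix (Fin n) (Fin n) F) :=
    fun X i ↦ E * X i
  have hshear (X : Fin t → Matrix (Fin n) (Fin n) F) (c : F) (i : Fin t) :
      (X + c • v X) i = transvection p j c * X i := by
    rw [Pi.add_apply, Pi.smul_apply, transvection, add_mul, one_mul, ← smul_mul_assoc, smul_single,
      smul_eq_mul, mul_one]
  have hv (X : Fin t → Matrix (Fin n) (Fin n) F) (c : F) : v (X + c • v X) = v X := by
    funext i
    change E * (X + c • v X) i = E * X i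
    rw [Pi.add_apply, Pi.smul_apply, mul_add, mul_smul_comm, ← mul_assoc,
      single_mul_single_of_ne _ _ _ _ hj.symm, zero_mul, smul_zero, add_zero]
  have hS : ∀ X ∈ restrictedBall k R C, ∀ c : F, X + c • v X ∈ restrictedBall k R C := by
    rintro X ⟨hXk, hX0⟩ c
    refine ⟨?_, fun i a b hab ↦ ?_⟩
    · simpa only [sumRankW, hshear, rank_mul_eq_right_of_isUnit_det _ _
        (by simp [det_transvection_of_ne _ _ hj] : IsUnit (transvection p j c).det)] using hXk
    · rw [hshear]
      rcases eq_or_ne a p with rfl | ha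
      · rw [transvection_mul_apply_same, hX0 i a b (hab.imp_left (absurd · hp)),
          hX0 i j b (.inr (hab.resolve_left hp)), mul_zero, add_zero]
      · rw [transvection_mul_apply_of_ne _ _ _ _ ha, hX0 i a b hab]
  have hzeros : {X ∈ restrictedBall k R C | v X = 0} = restrictedBall k (insert j R) C := by
    ext X
    have hvX : v X = 0 ↔ ∀ i b, X i j b = 0 := by
      refine ⟨fun h i b ↦ ?_, fun h ↦ funext fun i ↦ ?_⟩
      · simpa [v, E] using congrFun (congrFun (congrFun h i) p) b
      · ext a b
        rcases eq_or_ne a p with rfl | ha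
        · simp [v, E, h]
        · exact single_mul_apply_of_ne _ _ _ _ _ ha _
    simp only [restrictedBall, Set.mem_ofPred_eq, hvX, mem_insert, or_assoc]
    exact ⟨fun ⟨⟨hk, h0⟩, hj⟩ ↦ ⟨hk, fun i a b hab ↦ hab.elim (fun ha ↦ ha ▸ hj i b) (h0 i a b)⟩,
      fun ⟨hk, h0⟩ ↦ ⟨⟨hk, fun i a b hab ↦ h0 i a b (.inr hab)⟩, fun i b ↦ h0 i j b (.inl rfl)⟩⟩
  exact hzeros ▸ card_modEq_card_zeros v hv _ hS

theorem card_restrictedBall_modEq_rows [Fintype F] (k : ℕ) (C : Finset (Fin n)) {p : Fin n}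
    {R : Finset (Fin n)} (hp : p ∉ R) :
    Nat.card (restrictedBall (F := F) (t := t) k ∅ C) ≡
      Nat.card (restrictedBall (F := F) (t := t) k R C) [MOD Nat.card F] := by
  induction R using Finset.induction_on with
  | empty => rfl
  | insert j R _ ih =>
    obtain ⟨hpj, hpR⟩ := not_or.mp (mem_insert.not.mp hp)
    exact (ih hpR).trans (card_restrictedBall_modEq_insert C hpR hpj)

theorem rank_single_self [DecidableEq F] (p : Fin n) (c : F) :
    (single p p c).rank = if c = 0 then 0 else 1 := by
  split_ifs with hc
  · simp [hc]
  · rw [← diagonal_single, rank_diagonal]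
    simp [Pi.single_apply, hc]

theorem sumRankW_single_self [DecidableEq F] (p : Fin n) (x : Fin t → F) :
    sumRankW (fun i ↦ single p p (x i)) = hammingNorm x := by
  simp only [sumRankW, rank_single_self, hammingNorm, card_filter, ite_not]

theorem card_restrictedBall_erase_erase [DecidableEq F] (k : ℕ) (p : Fin n) :
    Nat.card (restrictedBall (F := F) (t := t) k (univ.erase p) (univ.erase p)) =
      Nat.card {x : Fin t → F // hammingNorm x ≤ k} := by
  have hsingle (X : restrictedBall (F := F) (t := t) k (univ.erase p) (univ.erase p)) (i : Fin t) :
      single p p (X.1 i p p) = X.1 i := by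
    ext a b
    by_cases hab : a = p ∧ b = p
    · obtain ⟨rfl, rfl⟩ := hab
      exact single_apply_same ..
    · have hoff : a ∈ univ.erase p ∨ b ∈ univ.erase p := by
        simp only [mem_erase, mem_univ, and_true]
        tauto
      rw [single_apply_of_ne _ _ _ _ _ (by tauto), X.2.2 i a b hoff]
  have hweight (X : restrictedBall (F := F) (t := t) k (univ.erase p) (univ.erase p)) :
      sumRankW X.1 = hammingNorm fun i ↦ X.1 i p p := by
    rw [← sumRankW_single_self p]
    simp only [hsingle]
  refine Nat.card_congr
    { toFun X := ⟨fun i ↦ X.1 i p p, hweight X ▸ X.2.1⟩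
      invFun x := ⟨fun i ↦ single p p (x.1 i), ?_, ?_⟩
      left_inv X := Subtype.ext (funext (hsingle X))
      right_inv x := Subtype.ext (funext fun i ↦ single_apply_same ..) }
  · exact (sumRankW_single_self p x.1).symm ▸ x.2
  · intro i a b hab
    simp only [mem_erase, mem_univ, and_true] at hab
    exact single_apply_of_ne _ _ _ _ _ (by tauto)

end RestrictedBall

theorem natCast_sum_choose_mul_pred_pow {q : ℕ} (hq : 0 < q) (t k : ℕ) :
    ((∑ w ∈ range (k + 1), t.choose w * (q - 1) ^ w : ℕ) : ZMod q) =
      1 + ∑ i ∈ Icc 1 k, (-1 : ZMod q) ^ i * (t.choose i : ZMod q) := by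
  have hneg : ((q - 1 : ℕ) : ZMod q) = -1 := by
    rw [Nat.cast_sub hq, ZMod.natCast_self, Nat.cast_one, zero_sub]
  rw [range_eq_Ico, Ico_add_one_right_eq_Icc, ← insert_Icc_add_one_left_eq_Icc k.zero_le,
    sum_insert (by simp)]
  push_cast [hneg]
  simp [mul_comm]

theorem stmt_14_general (F : Type) [Field F] [Fintype F] (q t n : ℕ)
    (hq : Fintype.card F = q) (hn : 2 ≤ n) (k : ℕ) :
    ((ballVol F t n n k : ℕ) : ZMod q) =
      1 + ∑ i ∈ Finset.Icc 1 k, (-1 : ZMod q) ^ i * (Nat.choose t i : ZMod q) := by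
  classical
  let p : Fin n := ⟨0, by omega⟩
  let D := univ.erase p
  have hvol : ballVol F t n n k ≡ ∑ w ∈ range (k + 1), t.choose w * (q - 1) ^ w [MOD q] := by
    rw [← hq, ← Nat.card_eq_fintype_card]
    calc ballVol F t n n k = Nat.card (restrictedBall (F := F) (t := t) k ∅ ∅) := by
          rw [restrictedBall_empty]; rfl
      _ ≡ Nat.card (restrictedBall (F := F) (t := t) k D ∅) [MOD Nat.card F] :=
          card_restrictedBall_modEq_rows k ∅ (notMem_erase p _)
      _ = Nat.card (restrictedBall (F := F) (t := t) k ∅ D) := card_restrictedBall_comm k D ∅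
      _ ≡ Nat.card (restrictedBall (F := F) (t := t) k D D) [MOD Nat.card F] :=
          card_restrictedBall_modEq_rows k D (notMem_erase p _)
      _ = _ := by
          rw [card_restrictedBall_erase_erase, card_hammingNorm_le, Fintype.card_fin,
            Nat.card_eq_fintype_card]
  rw [(ZMod.natCast_eq_natCast_iff _ _ _).mpr hvol,
    natCast_sum_choose_mul_pred_pow (hq ▸ Fintype.card_pos)]

theorem stmt_14 (F : Type) [Field F] [Fintype F] (q t n : ℕ)
    (hq : Fintype.card F = q) (ht : 1 ≤ t) (hn : 2 ≤ n) (k : ℕ) :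
    ((ballVol F t n n k : ℕ) : ZMod q) =
      1 + ∑ i ∈ Finset.Icc 1 k, (-1 : ZMod q) ^ i * (Nat.choose t i : ZMod q) :=
  stmt_14_general F q t n hq hn k
end

section
/- Let q be a prime power, t ≥ 1 and n ≥ 2 integers, and M = (𝔽_q^{n×n})^t. Suppose C is a perfect linear sum-rank code in M with minimum distance d ≥ 3, and set k = ⌊(d−1)/2⌋. If gcd(q, k!) = 1, then gcd(t, q) = 1. -/
open Matrix

/-!
The perfect-code identity `|C| · V_k = q^(t n²)` makes `V_k` a power of `p = char 𝔽_q`, and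
`V_k > 1` because `k ≥ 1`, so `p ∣ V_k`. Suppose `p ∣ t`. Group the `t` coordinates into `p`
blocks and let `ℤ/p` permute the blocks cyclically; this preserves the sum-rank weight, hence
acts on the ball of radius `k`. A fixed tuple repeats one block `p` times, so if it is nonzero
its weight is at least `p`, which exceeds `k` because `p ∤ k!`. Thus `0` is the only fixed
point and `V_k ≡ 1 (mod p)`, a contradiction.
-/

theorem Matrix.rank_eq_zero_iff_s15 {m n R : Type*} [Fintype n] [Field R] {A : Matrix m n R} :
    A.rank = 0 ↔ A = 0 := by
  classical
  refine ⟨fun h => ?_, fun h => h ▸ Matrix.rank_zero⟩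
  rw [Matrix.rank, Submodule.finrank_eq_zero, LinearMap.range_eq_bot] at h
  exact Matrix.toLin'.map_eq_zero_iff.1 h

theorem Nat.eq_one_of_dvd_prime_pow_of_modEq_one {p a N : ℕ} (hp : p.Prime) (ha : a ∣ p ^ N)
    (ha1 : a ≡ 1 [MOD p]) : a = 1 := by
  obtain ⟨_ | m, -, rfl⟩ := (Nat.dvd_prime_pow hp).1 ha
  · rfl
  · have h01 : 0 ≡ 1 [MOD p] :=
      (Nat.modEq_zero_iff_dvd.2 (dvd_pow_self p m.succ_ne_zero)).symm.trans ha1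
    exact (hp.not_dvd_one ((Nat.modEq_iff_dvd' zero_le_one).1 h01)).elim

section WeightBall

variable {G M : Type*} [Group G]

theorem IsPGroup.domMulAct {p : ℕ} (hG : IsPGroup p G) : IsPGroup p Gᵈᵐᵃ := fun g =>
  (hG (DomMulAct.mk.symm g)).imp fun k hk => by
    simpa using congrArg DomMulAct.mk hk

theorem apply_eq_apply_one_of_mem_fixedPoints {Y : G → M}
    (hY : Y ∈ MulAction.fixedPoints Gᵈᵐᵃ (G → M)) (g : G) : Y g = Y 1 := by
  simpa [DomMulAct.smul_apply] using congrFun (hY (DomMulAct.mk g)) 1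

def weightBall [Fintype G] (w : M → ℕ) (k : ℕ) : SubMulAction Gᵈᵐᵃ (G → M) where
  carrier := {Y | ∑ g, w (Y g) ≤ k}
  smul_mem' c Y hY :=
    (Equiv.sum_comp (Equiv.mulLeft (DomMulAct.mk.symm c)) (fun g => w (Y g))).trans_le hY

theorem mem_weightBall [Fintype G] {w : M → ℕ} {k : ℕ} {Y : G → M} :
    Y ∈ weightBall w k ↔ ∑ g, w (Y g) ≤ k :=
  Iff.rfl

theorem IsPGroup.card_weightBall_modEq_one [Fintype G] [Zero M] [Finite M] {p : ℕ}
    [Fact p.Prime] (hG : IsPGroup p G) (w : M → ℕ) (hw : ∀ x, w x = 0 ↔ x = 0) {k : ℕ}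
    (hk : k < Fintype.card G) :
    Nat.card {Y : G → M // ∑ g, w (Y g) ≤ k} ≡ 1 [MOD p] := by
  refine (hG.domMulAct.card_modEq_card_fixedPoints (weightBall (G := G) w k)).trans ?_
  have hfix : ∀ Y ∈ MulAction.fixedPoints Gᵈᵐᵃ (weightBall (G := G) w k),
      (Y : G → M) = 0 := by
    intro Y hY
    have hconst : ∀ g, Y.1 g = Y.1 1 := apply_eq_apply_one_of_mem_fixedPoints fun c =>
      congrArg Subtype.val (hY c)
    suffices Y.1 1 = 0 from funext fun g => (hconst g).trans this
    refine (hw _).1 (Nat.eq_zero_of_not_pos fun hpos => hk.not_ge ?_)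
    calc Fintype.card G ≤ Fintype.card G * w (Y.1 1) := Nat.le_mul_of_pos_right _ hpos
      _ = ∑ g, w (Y.1 g) := by simp [hconst]
      _ ≤ k := Y.2
  have hzero : (⟨0, by simp [mem_weightBall, (hw 0).2]⟩ : weightBall (G := G) w k) ∈
      MulAction.fixedPoints Gᵈᵐᵃ _ := fun _ => rfl
  rw [Nat.card_eq_one_iff_unique.2 ⟨⟨fun Y Z => ?_⟩, ⟨⟨_, hzero⟩⟩⟩]
  exact Subtype.ext (Subtype.ext ((hfix _ Y.2).trans (hfix _ Z.2).symm))

end WeightBall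

section SumRank

variable {F : Type} [Field F] {t n m : ℕ}

theorem sumRankW_eq_zero_iff {X : Fin t → Matrix (Fin n) (Fin m) F} :
    sumRankW X = 0 ↔ X = 0 := by
  simp [sumRankW, Finset.sum_eq_zero_iff, Matrix.rank_eq_zero_iff_s15, funext_iff]

theorem sumRankW_eq_sum_curry {ι κ : Type*} [Fintype ι] [Fintype κ] (e : Fin t ≃ ι × κ)
    (X : Fin t → Matrix (Fin n) (Fin m) F) :
    sumRankW X = ∑ i, ∑ j, (X (e.symm (i, j))).rank := by
  rw [sumRankW, ← Fintype.sum_prod_type', e.symm.sum_comp (fun a => (X a).rank)]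

theorem ballVol_modEq_one [Fintype F] {p k : ℕ} [Fact p.Prime] (hpt : p ∣ t) (hkp : k < p) :
    ballVol F t n m k ≡ 1 [MOD p] := by
  obtain ⟨s, rfl⟩ := hpt
  let e : Fin (p * s) ≃ Multiplicative (ZMod p) × Fin s := Fintype.equivOfCardEq (by simp)
  have hG : IsPGroup p (Multiplicative (ZMod p)) := IsPGroup.of_card (n := 1) (by simp)
  have hball := hG.card_weightBall_modEq_one (M := Fin s → Matrix (Fin n) (Fin m) F) sumRankW
    (fun _ => sumRankW_eq_zero_iff) (k := k) (by simpa using hkp)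
  rw [ballVol]
  convert hball using 1
  exact Nat.card_congr <|
    ((e.arrowCongr (Equiv.refl _)).trans (Equiv.curry _ _ _)).subtypeEquiv fun X => by
      rw [sumRankW_eq_sum_curry e]; rfl

theorem one_lt_ballVol [Fintype F] {k : ℕ} (ht : t ≠ 0) (hn : n ≠ 0) (hm : m ≠ 0)
    (hk : 1 ≤ k) : 1 < ballVol F t n m k := by
  have : NeZero t := ⟨ht⟩
  have : NeZero n := ⟨hn⟩
  have : NeZero m := ⟨hm⟩
  have hA : vecMulVec (1 : Fin n → F) (1 : Fin m → F) ≠ 0 := by simp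
  rw [ballVol, Finite.one_lt_card_iff_nontrivial]
  refine ⟨⟨0, by simp [sumRankW]⟩, ⟨Pi.single 0 (vecMulVec 1 1), ?_⟩, fun h => hA ?_⟩
  · rw [sumRankW_single]
    exact (rank_vecMulVec_le _ _).trans hk
  · simpa using (congrFun (congrArg Subtype.val h) 0).symm

end SumRank

theorem stmt_15_general (F : Type) [Field F] [Fintype F] (q t n : ℕ)
    (hq : Fintype.card F = q) (ht : 1 ≤ t) (hn : 2 ≤ n)
    (C : Submodule F (Fin t → Matrix (Fin n) (Fin n) F)) (d : ℕ)
    (hperf : IsPerfect F C d) (hd : 3 ≤ d)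
    (hgcd : Nat.gcd q (Nat.factorial ((d - 1) / 2)) = 1) :
    Nat.gcd t q = 1 := by
  obtain ⟨p, -, e, hp, hcard⟩ := FiniteField.card' F
  have : Fact p.Prime := ⟨hp⟩
  set k := (d - 1) / 2
  have hkp : k < p := by
    by_contra! hpk
    have hpq : p ∣ q := hq ▸ hcard ▸ dvd_pow_self p e.ne_zero
    exact hp.not_dvd_one (hgcd ▸ Nat.dvd_gcd hpq (hp.dvd_factorial.2 hpk))
  have hdvd : ballVol F t n n k ∣
      p ^ (e * Module.finrank F (Fin t → Matrix (Fin n) (Fin n) F)) := by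
    rw [pow_mul, ← hcard, ← Module.card_eq_pow_finrank, ← Nat.card_eq_fintype_card, ← hperf]
    exact dvd_mul_left _ _
  have hpt : ¬ p ∣ t := fun hpt =>
    (one_lt_ballVol (by omega) (by omega) (by omega) (by omega)).ne'
      (Nat.eq_one_of_dvd_prime_pow_of_modEq_one hp hdvd (ballVol_modEq_one hpt hkp))
  rw [← hq, hcard]
  exact Nat.Coprime.pow_right _ (Nat.coprime_comm.1 (hp.coprime_iff_not_dvd.2 hpt))

theorem stmt_15 (F : Type) [Field F] [Fintype F] (q t n : ℕ)
    (hq : Fintype.card F = q) (ht : 1 ≤ t) (hn : 2 ≤ n)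
    (C : Submodule F (Fin t → Matrix (Fin n) (Fin n) F)) (d : ℕ)
    (hmin : IsMinDist C d) (hperf : IsPerfect F C d) (hd : 3 ≤ d)
    (hgcd : Nat.gcd q (Nat.factorial ((d - 1) / 2)) = 1) :
    Nat.gcd t q = 1 :=
  stmt_15_general F q t n hq ht hn C d hperf hd hgcd
end
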